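/- A σ-Dedekind complete Banach lattice X is order continuous if and only if for every norm bounded sequence (f_n) in X₊, convergence f_n → 0 in the topology σ(X, X_n^~) implies weak convergence f_n → 0 (i.e., with respect to σ(X, X*)). -/

import Mathlib

open Filter Topology Pointwise

noncomputable section

/-- A directed index type for nets. -/
structure DirectedType : Type 1 where
  ι : Type
  r : ι → ι → Prop
  nonempty : Nonempty ι
  refl : ∀ a, r a a
  trans : ∀ a b c, r a b → r b c → r a c
  directed : ∀ a b, ∃ c, r a c ∧ r b c

/-- The natural numbers as a directed type (for sequences). -/
def natDir : DirectedType where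
  ι := ℕ
  r := (· ≤ ·)
  nonempty := ⟨0⟩
  refl := fun _ => le_refl _
  trans := fun _ _ _ => le_trans
  directed := fun a b => ⟨max a b, le_max_left _ _, le_max_right _ _⟩

/-- A real valued net tends to zero. -/
def NetTendstoZero (D : DirectedType) (u : D.ι → ℝ) : Prop :=
  ∀ ε : ℝ, 0 < ε → ∃ i₀, ∀ i, D.r i₀ i → |u i| < ε

variable {X : Type*} [NormedAddCommGroup X] [Lattice X] [HasSolidNorm X] [IsOrderedAddMonoid X] [NormedSpace ℝ X]

/-- Order convergence of a net: there is a decreasing net `h` with infimum `0`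
dominating `|f i - x|` eventually. -/
def OrderConvNet (D : DirectedType) (f : D.ι → X) (x : X) : Prop :=
  ∃ (E : DirectedType) (h : E.ι → X),
    (∀ γ₁ γ₂, E.r γ₁ γ₂ → h γ₂ ≤ h γ₁) ∧ IsGLB (Set.range h) 0 ∧
      ∀ γ, ∃ i₀, ∀ i, D.r i₀ i → |f i - x| ≤ h γ

/-- The order closure of a set: all limits of order convergent nets from the set. -/
def OrderClosure (C : Set X) : Set X :=
  {x | ∃ (D : DirectedType) (f : D.ι → X), (∀ i, f i ∈ C) ∧ OrderConvNet D f x}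

/-- A set is order closed if it contains all order limits of nets from it. -/
def IsOrderClosed (C : Set X) : Prop := OrderClosure C ⊆ C

/-- Unbounded order convergence of a net. -/
def UOConvNet (D : DirectedType) (f : D.ι → X) (x : X) : Prop :=
  ∀ h : X, 0 ≤ h → OrderConvNet D (fun i => |f i - x| ⊓ h) 0

/-- Membership in the order continuous dual `X_n^~`. -/
def InOCDual (g : X →L[ℝ] ℝ) : Prop :=
  ∀ (D : DirectedType) (f : D.ι → X), OrderConvNet D f 0 →
    NetTendstoZero D fun i => g (f i)

/-- Membership in the unbounded order continuous dual `X_uo^~`. -/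
def InUODual (g : X →L[ℝ] ℝ) : Prop :=
  ∀ (D : DirectedType) (f : D.ι → X), (∃ M, ∀ i, ‖f i‖ ≤ M) → UOConvNet D f 0 →
    NetTendstoZero D fun i => g (f i)

/-- Convergence of a net in the topology `σ(X, X_n^~)`. -/
def SigmaNConvNet (D : DirectedType) (f : D.ι → X) (x : X) : Prop :=
  ∀ g : X →L[ℝ] ℝ, InOCDual g → NetTendstoZero D fun i => g (f i) - g x

/-- Convergence of a net in the topology `σ(X, X_uo^~)`. -/
def SigmaUOConvNet (D : DirectedType) (f : D.ι → X) (x : X) : Prop :=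
  ∀ g : X →L[ℝ] ℝ, InUODual g → NetTendstoZero D fun i => g (f i) - g x

/-- A set is `σ(X, X_n^~)`-closed. -/
def IsSigmaNClosed (C : Set X) : Prop :=
  ∀ (D : DirectedType) (f : D.ι → X), (∀ i, f i ∈ C) →
    ∀ x, SigmaNConvNet D f x → x ∈ C

/-- A set is `σ(X, X_uo^~)`-closed. -/
def IsSigmaUOClosed (C : Set X) : Prop :=
  ∀ (D : DirectedType) (f : D.ι → X), (∀ i, f i ∈ C) →
    ∀ x, SigmaUOConvNet D f x → x ∈ C

/-- The `σ(X, X_n^~)`-closure of a set. -/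
def SigmaNClosure (C : Set X) : Set X :=
  {x | ∃ (D : DirectedType) (f : D.ι → X), (∀ i, f i ∈ C) ∧ SigmaNConvNet D f x}

/-- The `|σ|(X, X_n^~)`-sequential closure of a set. -/
def AbsSigmaSeqClosure (C : Set X) : Set X :=
  {x | ∃ s : ℕ → X, (∀ n, s n ∈ C) ∧
    ∀ g : X →L[ℝ] ℝ, InOCDual g → Tendsto (fun n => g (|s n - x|)) atTop (𝓝 0)}

/-- A set is `|σ|(X, X_n^~)`-sequentially closed. -/
def IsAbsSigmaSeqClosed (C : Set X) : Prop := AbsSigmaSeqClosure C ⊆ C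

/-- The order on the dual: `g ≤ h` iff `g x ≤ h x` on the positive cone. -/
def dualLE (g h : X →L[ℝ] ℝ) : Prop := ∀ x : X, 0 ≤ x → g x ≤ h x

/-- Order continuity of the norm on a subset `S` of the dual: every net in `S`
decreasing to `0` (infimum `0` among lower bounds from `S`) converges to `0` in
the operator norm. -/
def DualOCOn (S : Set (X →L[ℝ] ℝ)) : Prop :=
  ∀ (D : DirectedType) (f : D.ι → (X →L[ℝ] ℝ)), (∀ i, f i ∈ S) →
    (∀ i j, D.r i j → dualLE (f j) (f i)) → (∀ i, dualLE 0 (f i)) →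
    (∀ h ∈ S, (∀ i, dualLE h (f i)) → dualLE h 0) →
    NetTendstoZero D fun i => ‖f i‖

/-- A sequence is weakly null. -/
def WeaklyNull (f : ℕ → X) : Prop :=
  ∀ g : X →L[ℝ] ℝ, Tendsto (fun n => g (f n)) atTop (𝓝 0)

/-- The sequence satisfies a lower `ℓ¹`-estimate, i.e. it is equivalent to the
unit vector basis of `ℓ¹`. -/
def IsL1Basic (f : ℕ → X) : Prop :=
  ∃ M : ℝ, 0 < M ∧ ∀ (m : ℕ) (a : ℕ → ℝ),
    (1 / M) * ∑ k ∈ Finset.range m, |a k| ≤ ‖∑ k ∈ Finset.range m, a k • f k‖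

variable (X)

/-- Order continuity of the norm of `X`. -/
def OCNorm : Prop :=
  ∀ (D : DirectedType) (f : D.ι → X), (∀ i j, D.r i j → f j ≤ f i) →
    IsGLB (Set.range f) 0 → NetTendstoZero D fun i => ‖f i‖

/-- The order continuous dual as a set of continuous linear functionals. -/
def OCDual : Set (X →L[ℝ] ℝ) := {g | InOCDual g}

/-- The norm dual `X*` is order continuous. -/
def DualOrderContinuous : Prop := DualOCOn (Set.univ : Set (X →L[ℝ] ℝ))

/-- The order continuous dual `X_n^~` is order continuous. -/
def OCDualOrderContinuous : Prop := DualOCOn (OCDual X)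

/-- `X` is monotonically complete. -/
def MonotonicallyComplete : Prop :=
  ∀ (D : DirectedType) (f : D.ι → X), (∀ i j, D.r i j → f i ≤ f j) →
    (∃ M, ∀ i, ‖f i‖ ≤ M) → ∃ s, IsLUB (Set.range f) s

/-- `X` is Dedekind complete. -/
def DedekindComplete : Prop :=
  ∀ S : Set X, S.Nonempty → BddAbove S → ∃ s, IsLUB S s

/-- `X` is σ-Dedekind complete. -/
def SigmaDedekindComplete : Prop :=
  ∀ f : ℕ → X, BddAbove (Set.range f) → ∃ s, IsLUB (Set.range f) s

/-- `X` has the weak Fatou property. -/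
def WeakFatou : Prop :=
  ∃ r : ℝ, 0 < r ∧ ∀ (D : DirectedType) (f : D.ι → X),
    (∀ i j, D.r i j → f i ≤ f j) → ∀ s, IsLUB (Set.range f) s →
    ∀ M : ℝ, (∀ i, ‖f i‖ ≤ M) → ‖s‖ ≤ r * M

/-- `X_n^~` separates the points of `X`. -/
def OCDualSeparatesPoints : Prop :=
  ∀ x : X, x ≠ 0 → ∃ g : X →L[ℝ] ℝ, InOCDual g ∧ g x ≠ 0

/-- `X_n^~` contains a strictly positive element. -/
def HasStrictlyPositiveOCFunctional : Prop :=
  ∃ g : X →L[ℝ] ℝ, InOCDual g ∧ ∀ x : X, x ≠ 0 → 0 < g (|x|)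

/-- The unit ball `B` determined by `X_n^~`. -/
def KSBall : Set X :=
  {x | ∀ g : X →L[ℝ] ℝ, InOCDual g → dualLE 0 g → ‖g‖ ≤ 1 → g (|x|) ≤ 1}

/-- `σ(X, X_n^~)` has the Krein–Smulian property. -/
def KreinSmulianProperty : Prop :=
  ∀ C : Set X, Convex ℝ C →
    (∀ k : ℕ, IsSigmaNClosed (C ∩ (k : ℝ) • KSBall X)) → IsSigmaNClosed C

/-- Property `P1`: every order closed convex set is `σ(X, X_n^~)`-closed. -/
def PropP1 : Prop := ∀ C : Set X, Convex ℝ C → IsOrderClosed C → IsSigmaNClosed C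

/-- Property `P4`: every norm bounded order closed convex set is
`|σ|(X, X_n^~)`-sequentially closed. -/
def PropP4 : Prop :=
  ∀ C : Set X, Convex ℝ C → (∃ M, ∀ x ∈ C, ‖x‖ ≤ M) → IsOrderClosed C →
    IsAbsSigmaSeqClosed C

/-- The disjoint order continuity property. -/
def DOCP : Prop :=
  ∀ f : ℕ → X, (∀ n, 0 ≤ f n) → (∃ M, ∀ n, ‖f n‖ ≤ M) →
    (∀ n m, n ≠ m → f n ⊓ f m = 0) →
    (∀ g : X →L[ℝ] ℝ, InOCDual g → Tendsto (fun n => g (f n)) atTop (𝓝 0)) →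
    WeaklyNull f

/-- The order continuous part `X_a` of `X`. -/
def OrderContPart : Set X :=
  {f | ∀ (D : DirectedType) (g : D.ι → X), (∀ i, |g i| ≤ |f|) →
    OrderConvNet D g 0 → NetTendstoZero D fun i => ‖g i‖}

/-- The order subsequence splitting property. -/
def OSSP : Prop :=
  ∀ f : ℕ → X, (∀ n, 0 ≤ f n) → (∃ M, ∀ n, ‖f n‖ ≤ M) → UOConvNet natDir f 0 →
    ∃ φ : ℕ → ℕ, StrictMono φ ∧ ∃ x y z : ℕ → X,
      (∀ k, f (φ k) = x k + y k + z k) ∧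
      (∀ k, 0 ≤ x k) ∧ (∀ k, 0 ≤ y k) ∧ (∀ k, 0 ≤ z k) ∧
      (∀ k, x k ∈ OrderContPart X) ∧
      (∀ k l, k ≠ l → y k ⊓ y l = 0) ∧
      (∃ b, ∀ k, z k ≤ b)

variable {X}

/-!
If the norm is order continuous, every bounded functional is order continuous, so
`σ(X, X_n^~)` is the weak topology. Conversely, if `x_n ↓ 0` then `x_n → 0` in `σ(X, X_n^~)`,
hence weakly, and a weakly null decreasing positive sequence is norm null by Mazur's theorem,
since every convex combination of the `x_n` dominates one of them. Together with σ-Dedekind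
completeness this makes every decreasing positive sequence norm convergent. A decreasing net with
infimum `0` is then norm Cauchy, and its limit along a cofinal increasing sequence of indices
is a lower bound of the net, hence `0`.
-/

namespace DirectedType

variable {D : DirectedType}

lemma r_of_le {α : ℕ → D.ι} (hα : ∀ n, D.r (α n) (α (n + 1))) {m n : ℕ} (hmn : m ≤ n) :
    D.r (α m) (α n) := by
  induction n, hmn using Nat.le_induction with
  | base => exact D.refl _
  | succ n _ ih => exact D.trans _ _ _ ih (hα n)

lemma exists_chain_forall (P : ℕ → D.ι → Prop) (hP : ∀ n a b, D.r a b → P n a → P n b)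
    (hne : ∀ n, ∃ a, P n a) : ∃ α : ℕ → D.ι, (∀ n, D.r (α n) (α (n + 1))) ∧ ∀ n, P n (α n) := by
  choose c hc using hne
  choose ub hub_left hub_right using D.directed
  refine ⟨fun n => Nat.rec (c 0) (fun n a => ub a (c (n + 1))) n, fun n => hub_left _ _, ?_⟩
  intro n
  cases n with
  | zero => exact hc 0
  | succ n => exact hP _ _ _ (hub_right _ _) (hc (n + 1))

end DirectedType

lemma zero_mem_closure_convexHull_range {E : Type*} [NormedAddCommGroup E] [NormedSpace ℝ E]
    {f : ℕ → E} (hf : ∀ g : E →L[ℝ] ℝ, Tendsto (fun n => g (f n)) atTop (𝓝 0)) :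
    (0 : E) ∈ closure (convexHull ℝ (Set.range f)) := by
  by_contra h
  obtain ⟨g, u, hg, hu⟩ := geometric_hahn_banach_closed_point
    (convex_convexHull ℝ _).closure isClosed_closure h
  rw [map_zero] at hu
  obtain ⟨n, hn⟩ := ((hf g).eventually (eventually_gt_nhds hu)).exists
  exact (hg _ (subset_closure (subset_convexHull ℝ _ (Set.mem_range_self n)))).not_gt hn

lemma exists_le_of_mem_convexHull_range {E : Type*} [AddCommGroup E] [PartialOrder E]
    [IsOrderedAddMonoid E] [Module ℝ E] [PosSMulMono ℝ E] {f : ℕ → E} (hf : Antitone f) {c : E}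
    (hc : c ∈ convexHull ℝ (Set.range f)) : ∃ m, f m ≤ c := by
  have hconv : Convex ℝ (⋃ m, Set.Ici (f m)) :=
    (Monotone.directed_le fun _ _ h => Set.Ici_subset_Ici.2 (hf h)).convex_iUnion
      fun m => convex_Ici (f m)
  have hsub : Set.range f ⊆ ⋃ m, Set.Ici (f m) := by
    rintro _ ⟨m, rfl⟩
    exact Set.mem_iUnion.2 ⟨m, le_rfl⟩
  simpa using convexHull_min hsub hconv hc

lemma orderConvNet_natDir_of_antitone {E : Type*} [NormedAddCommGroup E] [Lattice E]
    [IsOrderedAddMonoid E] {u : ℕ → E} (hu : Antitone u) (hglb : IsGLB (Set.range u) 0) :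
    OrderConvNet natDir u 0 := by
  refine ⟨natDir, u, fun _ _ h => hu h, hglb, fun γ => ⟨γ, fun i hi => ?_⟩⟩
  rw [sub_zero, abs_of_nonneg (hglb.1 (Set.mem_range_self i))]
  exact hu hi

lemma netTendstoZero_natDir_iff {u : ℕ → ℝ} : NetTendstoZero natDir u ↔ Tendsto u atTop (𝓝 0) := by
  simp only [NetTendstoZero, Metric.tendsto_atTop, Real.dist_eq, sub_zero]
  rfl

lemma SigmaDedekindComplete.exists_isGLB {E : Type*} [AddCommGroup E] [Lattice E]
    [IsOrderedAddMonoid E] (hσ : SigmaDedekindComplete E) {f : ℕ → E}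
    (hf : BddBelow (Set.range f)) : ∃ y, IsGLB (Set.range f) y := by
  obtain ⟨s, hs⟩ := hσ (fun n => -f n) (by simpa [← Set.neg_range] using hf.neg)
  exact ⟨-s, isLUB_neg.1 (by rwa [Set.neg_range])⟩

-- A decreasing net that is not eventually `ε`-Cauchy contains a decreasing sequence with jumps
-- of size `ε`.
lemma exists_forall_norm_sub_lt {E : Type*} [NormedAddCommGroup E] [Preorder E]
    (H : ∀ u : ℕ → E, Antitone u → (∀ n, 0 ≤ u n) → ∃ z, Tendsto u atTop (𝓝 z))
    {D : DirectedType} {f : D.ι → E} (hdec : ∀ i j, D.r i j → f j ≤ f i) (hpos : ∀ i, 0 ≤ f i)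
    {ε : ℝ} (hε : 0 < ε) : ∃ a, ∀ b, D.r a b → ‖f a - f b‖ < ε := by
  by_contra! h
  choose next hnext_r hnext_ε using h
  obtain ⟨a₀⟩ := D.nonempty
  set α : ℕ → D.ι := fun n => next^[n] a₀
  have hα (n : ℕ) : α (n + 1) = next (α n) := Function.iterate_succ_apply' next n a₀
  obtain ⟨z, hz⟩ := H (fun n => f (α n))
    (antitone_nat_of_succ_le fun n => by rw [hα]; exact hdec _ _ (hnext_r _)) fun n => hpos _
  have hjump : Tendsto (fun n => ‖f (α n) - f (α (n + 1))‖) atTop (𝓝 0) := by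
    simpa using (hz.sub (hz.comp (tendsto_add_atTop_nat 1))).norm
  obtain ⟨n, hn⟩ := (hjump.eventually (gt_mem_nhds hε)).exists
  rw [hα] at hn
  exact (hnext_ε (α n)).not_gt hn

section SolidNorm

variable {E : Type*} [NormedAddCommGroup E] [Lattice E] [HasSolidNorm E]

lemma inOCDual_of_ocNorm [NormedSpace ℝ E] (hoc : OCNorm E) (g : E →L[ℝ] ℝ) : InOCDual g := by
  rintro D p ⟨F, h, hdec, hglb, hdom⟩ ε hε
  obtain ⟨γ, hγ⟩ := hoc F h hdec hglb (ε / (‖g‖ + 1)) (by positivity)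
  obtain ⟨i₀, hi₀⟩ := hdom γ
  refine ⟨i₀, fun i hi => ?_⟩
  have hp : ‖p i‖ ≤ ‖h γ‖ := norm_le_norm_of_abs_le_abs
    (by simpa using (hi₀ i hi).trans (le_abs_self (h γ)))
  have hhγ : ‖h γ‖ < ε / (‖g‖ + 1) := by simpa using hγ γ (F.refl γ)
  calc |g (p i)| ≤ ‖g‖ * ‖p i‖ := g.le_opNorm (p i)
    _ ≤ ‖g‖ * (ε / (‖g‖ + 1)) := by gcongr; exact hp.trans hhγ.le
    _ < ε := by
      rw [mul_div_assoc', div_lt_iff₀ (by positivity)]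
      nlinarith [norm_nonneg g]

variable [IsOrderedAddMonoid E]

lemma norm_le_norm_of_nonneg_of_le {a b : E} (ha : 0 ≤ a) (hab : a ≤ b) : ‖a‖ ≤ ‖b‖ :=
  norm_le_norm_of_abs_le_abs (by rwa [abs_of_nonneg ha, abs_of_nonneg (ha.trans hab)])

lemma norm_sub_le_norm_sub_of_r {D : DirectedType} {f : D.ι → E}
    (hdec : ∀ i j, D.r i j → f j ≤ f i) {a a' b : D.ι} (ha : D.r a a') (hb : D.r a' b) :
    ‖f a' - f b‖ ≤ ‖f a - f b‖ :=
  norm_le_norm_of_nonneg_of_le (sub_nonneg.2 (hdec _ _ hb)) (sub_le_sub_right (hdec _ _ ha) _)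

lemma ocNorm_of_forall_antitone_tendsto (H : ∀ u : ℕ → E, Antitone u → (∀ n, 0 ≤ u n) →
      ∃ z, Tendsto u atTop (𝓝 z)) : OCNorm E := by
  intro D f hdec hglb
  have hpos (i : D.ι) : 0 ≤ f i := hglb.1 (Set.mem_range_self i)
  obtain ⟨α, hα, hα_settled⟩ := D.exists_chain_forall
    (fun n a => ∀ b, D.r a b → ‖f a - f b‖ < 1 / (n + 1))
    (fun _ _ _ ha h _ hb =>
      (norm_sub_le_norm_sub_of_r hdec ha hb).trans_lt (h _ (D.trans _ _ _ ha hb)))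
    (fun _ => exists_forall_norm_sub_lt H hdec hpos Nat.one_div_pos_of_nat)
  obtain ⟨z, hz⟩ := H (fun n => f (α n)) (fun _ _ h => hdec _ _ (D.r_of_le hα h)) fun _ => hpos _
  set e : ℕ → ℝ := fun n => 1 / (n + 1) + ‖f (α n) - z‖
  have he : Tendsto e atTop (𝓝 0) := by
    simpa [e] using
      tendsto_one_div_add_atTop_nhds_zero_nat.add (tendsto_iff_norm_sub_tendsto_zero.1 hz)
  have hnear (n : ℕ) (b : D.ι) (hb : D.r (α n) b) : ‖f b - z‖ ≤ e n :=
    calc ‖f b - z‖ = ‖(f (α n) - z) - (f (α n) - f b)‖ := by rw [sub_sub_sub_cancel_left]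
      _ ≤ ‖f (α n) - z‖ + ‖f (α n) - f b‖ := norm_sub_le _ _
      _ ≤ e n := by rw [add_comm]; exact add_le_add_left (hα_settled n b hb).le _
  have hz_lower (β : D.ι) : z ≤ f β := by
    choose γ hγβ hγα using fun n => D.directed β (α n)
    have hγ : Tendsto (fun n => f (γ n)) atTop (𝓝 z) := tendsto_iff_norm_sub_tendsto_zero.2
      (squeeze_zero (fun _ => norm_nonneg _) (fun n => hnear n _ (hγα n)) he)
    exact le_of_tendsto' hγ fun n => hdec _ _ (hγβ n)
  have hz0 : z = 0 := le_antisymm (hglb.2 (by rintro _ ⟨β, rfl⟩; exact hz_lower β))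
    (ge_of_tendsto' hz fun _ => hpos _)
  intro ε hε
  obtain ⟨N, hN⟩ := (he.eventually (gt_mem_nhds hε)).exists
  refine ⟨α N, fun i hi => ?_⟩
  simpa [hz0] using (hnear N i hi).trans_lt hN

variable [NormedSpace ℝ E]

-- The order is not assumed compatible with the `ℝ`-action; compatibility follows from the
-- closedness of the positive cone, since dyadic multiples of a positive element are positive.
lemma smul_nonneg_of_hasSolidNorm {a : ℝ} (ha : 0 ≤ a) {z : E} (hz : 0 ≤ z) : 0 ≤ a • z := by
  have hdyadic : ∀ k m : ℕ, 0 ≤ ((m : ℝ) / 2 ^ k) • z := by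
    intro k
    induction k with
    | zero => simpa [Nat.cast_smul_eq_nsmul] using nsmul_nonneg hz
    | succ k ih =>
      intro m
      refine nsmul_two_semiclosed ?_
      rw [← Nat.cast_smul_eq_nsmul ℝ, smul_smul]
      convert ih m using 2
      push_cast
      ring
  have hlim : Tendsto (fun k : ℕ => ((⌊a * 2 ^ k⌋₊ : ℝ) / 2 ^ k) • z) atTop (𝓝 (a • z)) :=
    ((tendsto_nat_floor_mul_div_atTop ha).comp
      (tendsto_pow_atTop_atTop_of_one_lt one_lt_two)).smul_const z
  exact ge_of_tendsto' hlim fun k => hdyadic k _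

instance HasSolidNorm.posSMulMono : PosSMulMono ℝ E :=
  PosSMulMono.of_smul_nonneg fun _ ha _ hz => smul_nonneg_of_hasSolidNorm ha hz

lemma tendsto_norm_zero_of_antitone_of_weaklyNull {f : ℕ → E} (hf : Antitone f)
    (hpos : ∀ n, 0 ≤ f n) (hw : WeaklyNull f) : Tendsto (fun n => ‖f n‖) atTop (𝓝 0) := by
  rw [Metric.tendsto_atTop]
  intro ε hε
  obtain ⟨c, hc, hcε⟩ := Metric.mem_closure_iff.1 (zero_mem_closure_convexHull_range hw) ε hε
  obtain ⟨m, hm⟩ := exists_le_of_mem_convexHull_range hf hc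
  refine ⟨m, fun n hn => ?_⟩
  rw [Real.dist_eq, sub_zero, abs_of_nonneg (norm_nonneg _)]
  calc ‖f n‖ ≤ ‖c‖ := norm_le_norm_of_nonneg_of_le (hpos n) ((hf hn).trans hm)
    _ < ε := by rwa [dist_comm, dist_zero_right] at hcε

variable (E) in
def SigmaNNullImpliesWeaklyNull : Prop :=
  ∀ f : ℕ → E, (∀ n, 0 ≤ f n) → (∃ M : ℝ, ∀ n, ‖f n‖ ≤ M) →
    (∀ g : E →L[ℝ] ℝ, InOCDual g → Tendsto (fun n => g (f n)) atTop (𝓝 0)) → WeaklyNull f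

lemma exists_tendsto_of_antitone (hσ : SigmaDedekindComplete E)
    (hyp : SigmaNNullImpliesWeaklyNull E) {f : ℕ → E} (hf : Antitone f) (hpos : ∀ n, 0 ≤ f n) :
    ∃ y, Tendsto f atTop (𝓝 y) := by
  obtain ⟨y, hy⟩ := hσ.exists_isGLB ⟨0, by rintro _ ⟨n, rfl⟩; exact hpos n⟩
  set g : ℕ → E := fun n => f n - y
  have hg_anti : Antitone g := fun _ _ h => sub_le_sub_right (hf h) y
  have hg_glb : IsGLB (Set.range g) 0 := by
    have := hy.sub (isLUB_singleton (a := y))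
    rwa [sub_self, Set.sub_singleton, ← Set.range_comp] at this
  have hg_pos (n : ℕ) : 0 ≤ g n := hg_glb.1 (Set.mem_range_self n)
  have hg_sigma (φ : E →L[ℝ] ℝ) (hφ : InOCDual φ) : Tendsto (fun n => φ (g n)) atTop (𝓝 0) :=
    netTendstoZero_natDir_iff.1 (hφ natDir g (orderConvNet_natDir_of_antitone hg_anti hg_glb))
  have hg_weak : WeaklyNull g := hyp g hg_pos
    ⟨‖g 0‖, fun n => norm_le_norm_of_nonneg_of_le (hg_pos n) (hg_anti n.zero_le)⟩ hg_sigma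
  exact ⟨y, tendsto_iff_norm_sub_tendsto_zero.2
    (tendsto_norm_zero_of_antitone_of_weaklyNull hg_anti hg_pos hg_weak)⟩

end SolidNorm

theorem stmt6_general {X : Type*} [NormedAddCommGroup X] [Lattice X] [HasSolidNorm X] [IsOrderedAddMonoid X] [NormedSpace ℝ X]
    (hσ : SigmaDedekindComplete X) :
    OCNorm X ↔
      ∀ f : ℕ → X, (∀ n, 0 ≤ f n) → (∃ M : ℝ, ∀ n, ‖f n‖ ≤ M) →
        (∀ g : X →L[ℝ] ℝ, InOCDual g → Filter.Tendsto (fun n => g (f n)) Filter.atTop (nhds 0)) →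
        WeaklyNull f := by
  refine ⟨fun hoc f _ _ hf g => hf g (inOCDual_of_ocNorm hoc g), fun hyp => ?_⟩
  exact ocNorm_of_forall_antitone_tendsto fun _ hu hpos =>
    exists_tendsto_of_antitone hσ hyp hu hpos

/-- a σ-Dedekind complete Banach lattice is order continuous iff for
every norm bounded positive sequence, `σ(X, X_n^~)`-convergence to `0` implies weak
convergence to `0`. -/
theorem stmt6 {X : Type*} [NormedAddCommGroup X] [Lattice X] [HasSolidNorm X] [IsOrderedAddMonoid X] [NormedSpace ℝ X] [CompleteSpace X]
    (hσ : SigmaDedekindComplete X) :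
    OCNorm X ↔
      ∀ f : ℕ → X, (∀ n, 0 ≤ f n) → (∃ M : ℝ, ∀ n, ‖f n‖ ≤ M) →
        (∀ g : X →L[ℝ] ℝ, InOCDual g → Filter.Tendsto (fun n => g (f n)) Filter.atTop (nhds 0)) →
        WeaklyNull f :=
  stmt6_general hσ
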